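/- (The regularized approximation of the homogenized coefficient converges from above, with error given by the energy of the gradient difference.) Let Φ ∈ L²(Ω,ℙ;ℝ^d) be the limit in L²(Ω,ℙ;ℝ^d) of Dφ_μ as μ → 0⁺ (which exists). Then for every μ > 0: E[(ξ + Dφ_μ) · A(ξ + Dφ_μ)] − E[(ξ + Φ) · A(ξ + Φ)] = E[(Dφ_μ − Φ) · A(Dφ_μ − Φ)]; in particular E[(ξ + Dφ_μ) · A(ξ + Dφ_μ)] ≥ E[(ξ + Φ) · A(ξ + Φ)], i.e. the approximation ξ·A_μξ approaches ξ·A_hom ξ from above. -/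

import Mathlib

open MeasureTheory

namespace StochHom

/-- Edges of `ℤ^d`, indexed by their base vertex and their direction:
the pair `(x, i)` represents the edge `(x, x + eᵢ)`. -/
abbrev Edge (d : ℕ) := (Fin d → ℤ) × Fin d

/-- Environments: conductance functions `ω : 𝔹 → ℝ` (with values in `[α,β]`). -/
abbrev Env (d : ℕ) := Edge d → ℝ

/-- The coordinate unit vector `eᵢ` of `ℤ^d`. -/
def unit {d : ℕ} (i : Fin d) : Fin d → ℤ := Pi.single i 1

/-- The shift `θ_z` of the environment: `(θ_z ω)_{(x,y)} = ω_{(x+z,y+z)}`. -/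
def shift {d : ℕ} (z : Fin d → ℤ) (ω : Env d) : Env d :=
  fun e => ω (e.1 + z, e.2)

/-- Forward difference `Dᵢψ(ω) = ψ(θ_{eᵢ}ω) − ψ(ω)`. -/
def Dgrad {d : ℕ} (ψ : Env d → ℝ) (i : Fin d) (ω : Env d) : ℝ :=
  ψ (shift (unit i) ω) - ψ ω

/-- Backward difference `Dᵢ*ψ(ω) = ψ(ω) − ψ(θ_{−eᵢ}ω)`. -/
def DgradStar {d : ℕ} (ψ : Env d → ℝ) (i : Fin d) (ω : Env d) : ℝ :=
  ψ ω - ψ (shift (-unit i) ω)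

/-- The operator `𝓛ψ(ω) = Σ_{z∼0} ω_{(0,z)} (ψ(ω) − ψ(θ_z ω))`, the sum running over the
`2d` nearest neighbors `z` of `0` in `ℤ^d`.  The conductance of the edge `(0, eᵢ)` is
`ω (0, i)` and that of the edge `(0, −eᵢ)` is `ω (−eᵢ, i)`. -/
def genL {d : ℕ} (ψ : Env d → ℝ) (ω : Env d) : ℝ :=
  ∑ i : Fin d,
    (ω (0, i) * (ψ ω - ψ (shift (unit i) ω))
      + ω (-unit i, i) * (ψ ω - ψ (shift (-unit i) ω)))

/-- The local drift `𝔡(ω) = Σ_{z∼0} ω_{(0,z)} (ξ·z)` in the direction `ξ`. -/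
def drift {d : ℕ} (ξ : Fin d → ℝ) (ω : Env d) : ℝ :=
  ∑ i : Fin d, (ω (0, i) * ξ i + ω (-unit i, i) * (-ξ i))


/-!
The corrector equation in weak form says that `μ E[φ_μ ψ] + E[(ξ + Dφ_μ) · A Dψ] = 0` for every
`ψ ∈ L²`; testing with `ψ = φ_μ` bounds `μ E[φ_μ²]`, so `ν E[φ_ν ψ] → 0` as `ν → 0⁺`. In the
limit, `ξ + Φ` becomes `A`-orthogonal to every `Dφ_μ`, and then to `Φ` itself, hence to
`Dφ_μ - Φ`; the identity is Pythagoras' theorem for the form `(u, v) ↦ E[u · A v]`.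
-/

open Filter Topology

section CauchySchwarz

variable {Ω : Type*} [MeasurableSpace Ω] {P : Measure Ω} {f g : Ω → ℝ}

lemma integral_abs_mul_abs_le_sqrt (hf : MemLp f 2 P) (hg : MemLp g 2 P) :
    ∫ ω, |f ω| * |g ω| ∂P ≤ √(∫ ω, f ω ^ 2 ∂P) * √(∫ ω, g ω ^ 2 ∂P) := by
  have h := integral_mul_norm_le_Lp_mul_Lq Real.HolderConjugate.two_two
    (by simpa using hf) (by simpa using hg)
  simpa [Real.norm_eq_abs, Real.sqrt_eq_rpow] using h

lemma abs_integral_mul_le_sqrt (hf : MemLp f 2 P) (hg : MemLp g 2 P) :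
    |∫ ω, f ω * g ω ∂P| ≤ √(∫ ω, f ω ^ 2 ∂P) * √(∫ ω, g ω ^ 2 ∂P) :=
  (abs_integral_le_integral_abs.trans_eq (by simp_rw [abs_mul])).trans
    (integral_abs_mul_abs_le_sqrt hf hg)

lemma tendsto_mul_integral_mul_nhdsGT_zero {φ : ℝ → Ω → ℝ} {C : ℝ}
    (hφ : ∀ ν, 0 < ν → MemLp (φ ν) 2 P) (hbound : ∀ ν, 0 < ν → ν * ∫ ω, φ ν ω ^ 2 ∂P ≤ C)
    (hg : MemLp g 2 P) :
    Tendsto (fun ν => ν * ∫ ω, φ ν ω * g ω ∂P) (𝓝[>] 0) (𝓝 0) := by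
  have hsqrt : Tendsto (fun ν : ℝ => √ν * (√C * √(∫ ω, g ω ^ 2 ∂P))) (𝓝[>] 0) (𝓝 0) := by
    simpa using ((Real.continuous_sqrt.tendsto 0).mono_left nhdsWithin_le_nhds).mul_const
      (√C * √(∫ ω, g ω ^ 2 ∂P))
  refine squeeze_zero_norm' ?_ hsqrt
  filter_upwards [self_mem_nhdsWithin] with ν (hν : 0 < ν)
  have hsplit : ν * √(∫ ω, φ ν ω ^ 2 ∂P) = √ν * √(ν * ∫ ω, φ ν ω ^ 2 ∂P) := by
    rw [Real.sqrt_mul hν.le, ← mul_assoc, Real.mul_self_sqrt hν.le]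
  calc ‖ν * ∫ ω, φ ν ω * g ω ∂P‖
      ≤ ν * (√(∫ ω, φ ν ω ^ 2 ∂P) * √(∫ ω, g ω ^ 2 ∂P)) := by
        rw [norm_mul, Real.norm_of_nonneg hν.le, Real.norm_eq_abs]
        exact mul_le_mul_of_nonneg_left (abs_integral_mul_le_sqrt (hφ ν hν) hg) hν.le
    _ ≤ √ν * (√C * √(∫ ω, g ω ^ 2 ∂P)) := by
        rw [← mul_assoc, hsplit, mul_assoc]
        gcongr
        exact hbound ν hν

end CauchySchwarz

variable {d : ℕ}

section Shift

lemma measurable_shift (z : Fin d → ℤ) : Measurable (shift (d := d) z) :=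
  measurable_pi_lambda _ fun _ => measurable_pi_apply _

@[simp] lemma shift_shift (z w : Fin d → ℤ) (ω : Env d) :
    shift z (shift w ω) = shift (z + w) ω := by
  funext e; simp [shift, add_assoc]

@[simp] lemma shift_zero (ω : Env d) : shift 0 ω = ω := by
  funext e; simp [shift]

@[simp] lemma shift_apply (z : Fin d → ℤ) (ω : Env d) (e : Edge d) :
    shift z ω e = ω (e.1 + z, e.2) := rfl

def shiftEquiv (z : Fin d → ℤ) : Env d ≃ᵐ Env d where
  toFun := shift z
  invFun := shift (-z)
  left_inv ω := by simp
  right_inv ω := by simp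
  measurable_toFun := measurable_shift z
  measurable_invFun := measurable_shift (-z)

variable {P : Measure (Env d)}

lemma integral_comp_shift {z : Fin d → ℤ} (hz : MeasurePreserving (shift z) P P)
    (F : Env d → ℝ) : ∫ ω, F (shift z ω) ∂P = ∫ ω, F ω ∂P :=
  hz.integral_comp (shiftEquiv z).measurableEmbedding F

lemma memLp_Dgrad (hshift : ∀ z : Fin d → ℤ, MeasurePreserving (shift z) P P)
    {u : Env d → ℝ} (hu : MemLp u 2 P) (i : Fin d) : MemLp (Dgrad u i) 2 P :=
  (hu.comp_measurePreserving (hshift _)).sub hu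

lemma memLp_DgradStar (hshift : ∀ z : Fin d → ℤ, MeasurePreserving (shift z) P P)
    {u : Env d → ℝ} (hu : MemLp u 2 P) (i : Fin d) : MemLp (DgradStar u i) 2 P :=
  hu.sub (hu.comp_measurePreserving (hshift _))

lemma integral_DgradStar_mul (hshift : ∀ z : Fin d → ℤ, MeasurePreserving (shift z) P P)
    {G ψ : Env d → ℝ} (hG : MemLp G 2 P) (hψ : MemLp ψ 2 P) (i : Fin d) :
    ∫ ω, DgradStar G i ω * ψ ω ∂P = -∫ ω, G ω * Dgrad ψ i ω ∂P := by
  have hshifted :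
      ∫ ω, G (shift (-unit i) ω) * ψ ω ∂P = ∫ ω, G ω * ψ (shift (unit i) ω) ∂P := by
    rw [← integral_comp_shift (hshift (unit i))]
    simp
  have hGψ : Integrable (fun ω => G ω * ψ ω) P := hG.integrable_mul hψ
  have hGψ' : Integrable (fun ω => G (shift (-unit i) ω) * ψ ω) P :=
    (hG.comp_measurePreserving (hshift _)).integrable_mul hψ
  have hGψ'' : Integrable (fun ω => G ω * ψ (shift (unit i) ω)) P :=
    hG.integrable_mul (hψ.comp_measurePreserving (hshift _))
  simp only [DgradStar, Dgrad, sub_mul, mul_sub]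
  rw [integral_sub hGψ hGψ', integral_sub hGψ'' hGψ, hshifted]
  ring

end Shift

section Weights

variable {P : Measure (Env d)} {β : ℝ}

lemma memLp_weight_mul (hω : ∀ᵐ ω ∂P, ∀ e, ω e ∈ Set.Icc 0 β) (e : Edge d) {u : Env d → ℝ}
    (hu : MemLp u 2 P) :
    MemLp (fun ω => ω e * u ω) 2 P := by
  refine hu.of_le_mul (c := β) ((measurable_pi_apply e).aestronglyMeasurable.mul hu.1) ?_
  filter_upwards [hω] with ω h
  rw [norm_mul, Real.norm_of_nonneg (h e).1]
  exact mul_le_mul_of_nonneg_right (h e).2 (norm_nonneg _)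

lemma integrable_weight_mul_mul (hω : ∀ᵐ ω ∂P, ∀ e, ω e ∈ Set.Icc 0 β) (e : Edge d)
    {u v : Env d → ℝ} (hu : MemLp u 2 P) (hv : MemLp v 2 P) :
    Integrable (fun ω => ω e * u ω * v ω) P :=
  (memLp_weight_mul hω e hu).integrable_mul hv

lemma abs_integral_weight_mul_mul_le (hω : ∀ᵐ ω ∂P, ∀ e, ω e ∈ Set.Icc 0 β) (hβ : 0 ≤ β)
    (e : Edge d) {u v : Env d → ℝ} (hu : MemLp u 2 P) (hv : MemLp v 2 P) :
    |∫ ω, ω e * u ω * v ω ∂P| ≤ β * (√(∫ ω, u ω ^ 2 ∂P) * √(∫ ω, v ω ^ 2 ∂P)) := by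
  have huv : Integrable (fun ω => |u ω| * |v ω|) P := by
    simpa only [Pi.mul_apply, abs_mul] using (hu.integrable_mul hv).abs
  calc |∫ ω, ω e * u ω * v ω ∂P|
      ≤ ∫ ω, |ω e * u ω * v ω| ∂P := abs_integral_le_integral_abs
    _ ≤ ∫ ω, β * (|u ω| * |v ω|) ∂P := by
        refine integral_mono_ae (integrable_weight_mul_mul hω e hu hv).abs
          (huv.const_mul β) ?_
        filter_upwards [hω] with ω h
        rw [abs_mul, abs_mul, abs_of_nonneg (h e).1, mul_assoc]
        exact mul_le_mul_of_nonneg_right (h e).2 (by positivity)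
    _ ≤ β * (√(∫ ω, u ω ^ 2 ∂P) * √(∫ ω, v ω ^ 2 ∂P)) := by
        rw [integral_const_mul]
        exact mul_le_mul_of_nonneg_left (integral_abs_mul_abs_le_sqrt hu hv) hβ

end Weights

section EnergyForm

/-- `energyForm P u v = E[u · A v]`. -/
noncomputable def energyForm (P : Measure (Env d)) (u v : Fin d → Env d → ℝ) : ℝ :=
  ∑ i, ∫ ω, ω (0, i) * u i ω * v i ω ∂P

variable {P : Measure (Env d)} {β : ℝ} {u v w : Fin d → Env d → ℝ}

lemma energyForm_comm : energyForm P u v = energyForm P v u := by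
  simp only [energyForm, mul_right_comm]

lemma energyForm_sub_left (hω : ∀ᵐ ω ∂P, ∀ e, ω e ∈ Set.Icc 0 β) (hu : ∀ i, MemLp (u i) 2 P)
    (hw : ∀ i, MemLp (w i) 2 P) (hv : ∀ i, MemLp (v i) 2 P) :
    energyForm P (u - w) v = energyForm P u v - energyForm P w v := by
  simp only [energyForm, ← Finset.sum_sub_distrib]
  refine Finset.sum_congr rfl fun i _ => ?_
  rw [← integral_sub (integrable_weight_mul_mul hω _ (hu i) (hv i))
    (integrable_weight_mul_mul hω _ (hw i) (hv i))]
  congr 1 with ω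
  simp only [Pi.sub_apply]
  ring

lemma energyForm_sub_right (hω : ∀ᵐ ω ∂P, ∀ e, ω e ∈ Set.Icc 0 β) (hu : ∀ i, MemLp (u i) 2 P)
    (hv : ∀ i, MemLp (v i) 2 P) (hw : ∀ i, MemLp (w i) 2 P) :
    energyForm P u (v - w) = energyForm P u v - energyForm P u w := by
  rw [energyForm_comm, energyForm_sub_left hω hv hw hu, energyForm_comm, energyForm_comm (u := w)]

lemma energyForm_add_add_self (hω : ∀ᵐ ω ∂P, ∀ e, ω e ∈ Set.Icc 0 β)
    (hu : ∀ i, MemLp (u i) 2 P) (hv : ∀ i, MemLp (v i) 2 P) :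
    energyForm P (u + v) (u + v) = energyForm P u u + 2 * energyForm P u v + energyForm P v v := by
  simp only [energyForm, Finset.mul_sum, ← Finset.sum_add_distrib]
  refine Finset.sum_congr rfl fun i _ => ?_
  have huu := integrable_weight_mul_mul hω (0, i) (hu i) (hu i)
  have huv := integrable_weight_mul_mul hω (0, i) (hu i) (hv i)
  have hvv := integrable_weight_mul_mul hω (0, i) (hv i) (hv i)
  have hexpand : (fun ω => ω (0, i) * (u + v) i ω * (u + v) i ω) = fun ω =>
      ω (0, i) * u i ω * u i ω + 2 * (ω (0, i) * u i ω * v i ω) + ω (0, i) * v i ω * v i ω := by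
    funext ω
    simp only [Pi.add_apply]
    ring
  have huu_uv : Integrable
      (fun ω => ω (0, i) * u i ω * u i ω + 2 * (ω (0, i) * u i ω * v i ω)) P :=
    huu.add (huv.const_mul 2)
  rw [hexpand, integral_add huu_uv hvv, integral_add huu (huv.const_mul 2), integral_const_mul]

lemma energyForm_self_nonneg (hω : ∀ᵐ ω ∂P, ∀ e, ω e ∈ Set.Icc 0 β) :
    0 ≤ energyForm P u u :=
  Finset.sum_nonneg fun i _ => integral_nonneg_of_ae <| hω.mono fun ω h => by
    show 0 ≤ ω (0, i) * u i ω * u i ω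
    rw [mul_assoc]
    exact mul_nonneg (h _).1 (mul_self_nonneg _)

lemma integral_sum_weight_mul_sq (hω : ∀ᵐ ω ∂P, ∀ e, ω e ∈ Set.Icc 0 β)
    (hu : ∀ i, MemLp (u i) 2 P) :
    ∫ ω, ∑ i, ω (0, i) * u i ω ^ 2 ∂P = energyForm P u u := by
  rw [integral_finsetSum _ fun i _ => by
    simpa only [mul_assoc, sq] using integrable_weight_mul_mul hω (0, i) (hu i) (hu i)]
  simp only [energyForm, mul_assoc, sq]

lemma abs_energyForm_le (hω : ∀ᵐ ω ∂P, ∀ e, ω e ∈ Set.Icc 0 β) (hβ : 0 ≤ β)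
    (hu : ∀ i, MemLp (u i) 2 P) (hv : ∀ i, MemLp (v i) 2 P) :
    |energyForm P u v| ≤ β * ∑ i, √(∫ ω, u i ω ^ 2 ∂P) * √(∫ ω, v i ω ^ 2 ∂P) := by
  rw [Finset.mul_sum]
  exact (Finset.abs_sum_le_sum_abs _ _).trans <| Finset.sum_le_sum fun i _ =>
    abs_integral_weight_mul_mul_le hω hβ _ (hu i) (hv i)

lemma tendsto_energyForm_left {ι : Type*} {l : Filter ι} {g : ι → Fin d → Env d → ℝ}
    (hω : ∀ᵐ ω ∂P, ∀ e, ω e ∈ Set.Icc 0 β) (hβ : 0 ≤ β) (hg : ∀ᶠ n in l, ∀ i, MemLp (g n i) 2 P)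
    (hu : ∀ i, MemLp (u i) 2 P) (hv : ∀ i, MemLp (v i) 2 P)
    (hlim : Tendsto (fun n => ∫ ω, ∑ i, (g n i ω - u i ω) ^ 2 ∂P) l (𝓝 0)) :
    Tendsto (fun n => energyForm P (g n) v) l (𝓝 (energyForm P u v)) := by
  set K := β * ∑ i, √(∫ ω, v i ω ^ 2 ∂P)
  have hsqrt : Tendsto (fun n => √(∫ ω, ∑ i, (g n i ω - u i ω) ^ 2 ∂P) * K) l (𝓝 0) := by
    simpa using ((Real.continuous_sqrt.tendsto 0).comp hlim).mul_const K
  rw [tendsto_iff_norm_sub_tendsto_zero]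
  refine squeeze_zero' (Eventually.of_forall fun _ => norm_nonneg _) ?_ hsqrt
  filter_upwards [hg] with n hgn
  have hδ : ∀ i, MemLp ((g n - u) i) 2 P := fun i => (hgn i).sub (hu i)
  have hδ_le : ∀ i, ∫ ω, (g n - u) i ω ^ 2 ∂P ≤ ∫ ω, ∑ j, (g n j ω - u j ω) ^ 2 ∂P := fun i =>
    integral_mono (hδ i).integrable_sq (integrable_finsetSum _ fun j _ => (hδ j).integrable_sq)
      fun ω => Finset.single_le_sum (f := fun j => (g n j ω - u j ω) ^ 2)
        (fun j _ => sq_nonneg _) (Finset.mem_univ i)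
  rw [Real.norm_eq_abs, ← energyForm_sub_left hω hgn hu hv]
  refine (abs_energyForm_le hω hβ hδ hv).trans ?_
  calc β * ∑ i, √(∫ ω, (g n - u) i ω ^ 2 ∂P) * √(∫ ω, v i ω ^ 2 ∂P)
      ≤ β * ∑ i, √(∫ ω, ∑ j, (g n j ω - u j ω) ^ 2 ∂P) * √(∫ ω, v i ω ^ 2 ∂P) := by
        refine mul_le_mul_of_nonneg_left (Finset.sum_le_sum fun i _ => ?_) hβ
        exact mul_le_mul_of_nonneg_right (Real.sqrt_le_sqrt (hδ_le i)) (Real.sqrt_nonneg _)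
    _ = √(∫ ω, ∑ i, (g n i ω - u i ω) ^ 2 ∂P) * K := by
        rw [← Finset.mul_sum]
        ring

end EnergyForm

section Corrector

def IsRegCorrector (P : Measure (Env d)) (ξ : Fin d → ℝ) (μ : ℝ) (f : Env d → ℝ) : Prop :=
  MemLp f 2 P ∧ ∀ᵐ ω ∂P, μ * f ω + genL f ω = drift ξ ω

lemma genL_sub_drift (ξ : Fin d → ℝ) (f : Env d → ℝ) (ω : Env d) :
    genL f ω - drift ξ ω = -∑ i, DgradStar (fun ω => ω (0, i) * (ξ i + Dgrad f i ω)) i ω := by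
  rw [genL, drift, ← Finset.sum_sub_distrib, ← Finset.sum_neg_distrib]
  refine Finset.sum_congr rfl fun i _ => ?_
  simp only [DgradStar, Dgrad, shift_shift, add_neg_cancel, shift_zero, shift_apply, zero_add]
  ring

variable {P : Measure (Env d)} {β : ℝ} {ξ : Fin d → ℝ} {μ : ℝ} {f : Env d → ℝ}

lemma IsRegCorrector.weak_form [IsFiniteMeasure P] (hω : ∀ᵐ ω ∂P, ∀ e, ω e ∈ Set.Icc 0 β)
    (hshift : ∀ z : Fin d → ℤ, MeasurePreserving (shift z) P P) (h : IsRegCorrector P ξ μ f)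
    {ψ : Env d → ℝ} (hψ : MemLp ψ 2 P) :
    μ * ∫ ω, f ω * ψ ω ∂P + energyForm P (fun i ω => ξ i + Dgrad f i ω) (Dgrad ψ) = 0 := by
  obtain ⟨hf, heq⟩ := h
  have hG : ∀ i, MemLp (fun ω : Env d => ω (0, i) * (ξ i + Dgrad f i ω)) 2 P := fun i =>
    memLp_weight_mul hω (0, i) ((memLp_const (ξ i)).add (memLp_Dgrad hshift hf i))
  have hGψ : ∀ i, Integrable (fun ω =>
      DgradStar (fun ω : Env d => ω (0, i) * (ξ i + Dgrad f i ω)) i ω * ψ ω) P := fun i =>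
    (memLp_DgradStar hshift (hG i) i).integrable_mul hψ
  have hzero : ∫ ω, (μ * f ω + genL f ω - drift ξ ω) * ψ ω ∂P = 0 :=
    integral_eq_zero_of_ae <| heq.mono fun ω h => by simp [h]
  have hexpand : ∀ ω, (μ * f ω + genL f ω - drift ξ ω) * ψ ω = μ * (f ω * ψ ω)
      - ∑ i, DgradStar (fun ω : Env d => ω (0, i) * (ξ i + Dgrad f i ω)) i ω * ψ ω := by
    intro ω
    rw [add_sub_assoc, genL_sub_drift, add_mul, neg_mul, Finset.sum_mul]
    ring
  have hfψ : Integrable (fun ω => μ * (f ω * ψ ω)) P := (hf.integrable_mul hψ).const_mul μ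
  have hsum : Integrable (fun ω =>
      ∑ i, DgradStar (fun ω : Env d => ω (0, i) * (ξ i + Dgrad f i ω)) i ω * ψ ω) P :=
    integrable_finsetSum _ fun i _ => hGψ i
  simp only [hexpand] at hzero
  rw [integral_sub hfψ hsum, integral_const_mul, integral_finsetSum _ fun i _ => hGψ i] at hzero
  simp only [integral_DgradStar_mul hshift (hG _) hψ, Finset.sum_neg_distrib, sub_neg_eq_add]
    at hzero
  exact hzero

lemma IsRegCorrector.mul_integral_sq_le [IsProbabilityMeasure P]
    (hω : ∀ᵐ ω ∂P, ∀ e, ω e ∈ Set.Icc 0 β)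
    (hshift : ∀ z : Fin d → ℤ, MeasurePreserving (shift z) P P) (h : IsRegCorrector P ξ μ f) :
    μ * ∫ ω, f ω ^ 2 ∂P ≤ β / 4 * ∑ i, ξ i ^ 2 := by
  have hweak := h.weak_form hω hshift h.1
  have hDf : ∀ i, MemLp (Dgrad f i) 2 P := memLp_Dgrad hshift h.1
  have hlower :
      -(β / 4 * ∑ i, ξ i ^ 2) ≤ energyForm P (fun i ω => ξ i + Dgrad f i ω) (Dgrad f) := by
    rw [Finset.mul_sum, ← Finset.sum_neg_distrib]
    refine Finset.sum_le_sum fun i _ => ?_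
    refine le_of_eq_of_le (by simp) <| integral_mono_ae (integrable_const (-(β / 4 * ξ i ^ 2)))
      (integrable_weight_mul_mul hω (0, i) ((memLp_const (ξ i)).add (hDf i)) (hDf i)) ?_
    filter_upwards [hω] with ω hw
    -- `w (ξ + x) x + β ξ² / 4 = w (x + ξ / 2)² + (β - w) ξ² / 4`
    nlinarith [mul_nonneg (hw (0, i)).1 (sq_nonneg (Dgrad f i ω + ξ i / 2)),
      mul_nonneg (sub_nonneg.2 (hw (0, i)).2) (sq_nonneg (ξ i))]
  simp only [← sq] at hweak
  linarith

end Corrector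

section Limit

variable {P : Measure (Env d)} [IsProbabilityMeasure P] {β : ℝ} {ξ : Fin d → ℝ}
  {φ : ℝ → Env d → ℝ} {Φ : Fin d → Env d → ℝ}

lemma energyForm_add_limit_Dgrad_eq_zero (hω : ∀ᵐ ω ∂P, ∀ e, ω e ∈ Set.Icc 0 β) (hβ : 0 ≤ β)
    (hshift : ∀ z : Fin d → ℤ, MeasurePreserving (shift z) P P)
    (hφ : ∀ ν, 0 < ν → IsRegCorrector P ξ ν (φ ν)) (hΦ : ∀ i, MemLp (Φ i) 2 P)
    (hlim : Tendsto (fun ν => ∫ ω, ∑ i, (Dgrad (φ ν) i ω - Φ i ω) ^ 2 ∂P) (𝓝[>] 0) (𝓝 0))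
    {μ : ℝ} (hμ : 0 < μ) :
    energyForm P (fun i ω => ξ i + Φ i ω) (Dgrad (φ μ)) = 0 := by
  have hconv : Tendsto (fun ν => energyForm P (fun i ω => ξ i + Dgrad (φ ν) i ω) (Dgrad (φ μ)))
      (𝓝[>] 0) (𝓝 (energyForm P (fun i ω => ξ i + Φ i ω) (Dgrad (φ μ)))) :=
    tendsto_energyForm_left hω hβ
      (eventually_mem_nhdsWithin.mono fun ν hν i =>
        (memLp_const (ξ i)).add (memLp_Dgrad hshift (hφ ν hν).1 i))
      (fun i => (memLp_const (ξ i)).add (hΦ i)) (memLp_Dgrad hshift (hφ μ hμ).1)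
      (by simpa only [add_sub_add_left_eq_sub] using hlim)
  have hweak : ∀ᶠ ν in 𝓝[>] 0, -(ν * ∫ ω, φ ν ω * φ μ ω ∂P)
      = energyForm P (fun i ω => ξ i + Dgrad (φ ν) i ω) (Dgrad (φ μ)) :=
    eventually_mem_nhdsWithin.mono fun ν hν =>
      (eq_neg_of_add_eq_zero_right ((hφ ν hν).weak_form hω hshift (hφ μ hμ).1)).symm
  have hvanish : Tendsto (fun ν => -(ν * ∫ ω, φ ν ω * φ μ ω ∂P)) (𝓝[>] 0) (𝓝 0) := by
    simpa using (tendsto_mul_integral_mul_nhdsGT_zero (fun ν hν => (hφ ν hν).1)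
      (fun ν hν => (hφ ν hν).mul_integral_sq_le hω hshift) (hφ μ hμ).1).neg
  exact tendsto_nhds_unique hconv (hvanish.congr' hweak)

lemma energyForm_add_limit_limit_eq_zero (hω : ∀ᵐ ω ∂P, ∀ e, ω e ∈ Set.Icc 0 β) (hβ : 0 ≤ β)
    (hshift : ∀ z : Fin d → ℤ, MeasurePreserving (shift z) P P)
    (hφ : ∀ ν, 0 < ν → IsRegCorrector P ξ ν (φ ν)) (hΦ : ∀ i, MemLp (Φ i) 2 P)
    (hlim : Tendsto (fun ν => ∫ ω, ∑ i, (Dgrad (φ ν) i ω - Φ i ω) ^ 2 ∂P) (𝓝[>] 0) (𝓝 0)) :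
    energyForm P (fun i ω => ξ i + Φ i ω) Φ = 0 := by
  have hconv : Tendsto (fun ν => energyForm P (Dgrad (φ ν)) (fun i ω => ξ i + Φ i ω))
      (𝓝[>] 0) (𝓝 (energyForm P Φ (fun i ω => ξ i + Φ i ω))) :=
    tendsto_energyForm_left hω hβ
      (eventually_mem_nhdsWithin.mono fun ν hν => memLp_Dgrad hshift (hφ ν hν).1)
      hΦ (fun i => (memLp_const (ξ i)).add (hΦ i)) hlim
  have horth : ∀ᶠ ν in 𝓝[>] 0, 0 = energyForm P (Dgrad (φ ν)) (fun i ω => ξ i + Φ i ω) :=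
    eventually_mem_nhdsWithin.mono fun ν hν => by
      rw [energyForm_comm, energyForm_add_limit_Dgrad_eq_zero hω hβ hshift hφ hΦ hlim hν]
  rw [energyForm_comm]
  exact tendsto_nhds_unique hconv (tendsto_const_nhds.congr' horth)

end Limit

theorem statement12_general {d : ℕ} {α β : ℝ} (hα : 0 < α) (hαβ : α ≤ β)
    (P : Measure (Env d)) [IsProbabilityMeasure P]
    (hsupp : ∀ᵐ ω ∂P, ∀ e, ω e ∈ Set.Icc α β)
    (hshift : ∀ z : Fin d → ℤ, MeasurePreserving (shift z) P P)
    (ξ : Fin d → ℝ) (φ : ℝ → Env d → ℝ)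
    (hφ : ∀ μ : ℝ, 0 < μ → MemLp (φ μ) 2 P ∧
      (∀ᵐ ω ∂P, μ * φ μ ω + genL (φ μ) ω = drift ξ ω))
    (Φ : Fin d → Env d → ℝ) (hΦ : ∀ i, MemLp (Φ i) 2 P)
    (hlim : Filter.Tendsto
      (fun μ : ℝ => ∫ ω, ∑ i : Fin d, (Dgrad (φ μ) i ω - Φ i ω) ^ 2 ∂P)
      (nhdsWithin 0 (Set.Ioi 0)) (nhds 0)) :
    ∀ μ : ℝ, 0 < μ →
      (∫ ω, ∑ i : Fin d, ω (0, i) * (ξ i + Dgrad (φ μ) i ω) ^ 2 ∂P)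
          - ∫ ω, ∑ i : Fin d, ω (0, i) * (ξ i + Φ i ω) ^ 2 ∂P
        = ∫ ω, ∑ i : Fin d, ω (0, i) * (Dgrad (φ μ) i ω - Φ i ω) ^ 2 ∂P ∧
      (∫ ω, ∑ i : Fin d, ω (0, i) * (ξ i + Φ i ω) ^ 2 ∂P)
        ≤ ∫ ω, ∑ i : Fin d, ω (0, i) * (ξ i + Dgrad (φ μ) i ω) ^ 2 ∂P := by
  intro μ hμ
  have hω : ∀ᵐ ω ∂P, ∀ e, ω e ∈ Set.Icc 0 β :=
    hsupp.mono fun ω h e => ⟨hα.le.trans (h e).1, (h e).2⟩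
  have hβ : 0 ≤ β := hα.le.trans hαβ
  have hDφ : ∀ i, MemLp (Dgrad (φ μ) i) 2 P := memLp_Dgrad hshift (hφ μ hμ).1
  have ha : ∀ i, MemLp (fun ω => ξ i + Φ i ω) 2 P := fun i => (memLp_const (ξ i)).add (hΦ i)
  have hδ : ∀ i, MemLp (fun ω => Dgrad (φ μ) i ω - Φ i ω) 2 P := fun i => (hDφ i).sub (hΦ i)
  have hb : ∀ i, MemLp (fun ω => ξ i + Dgrad (φ μ) i ω) 2 P := fun i =>
    (memLp_const (ξ i)).add (hDφ i)
  rw [integral_sum_weight_mul_sq hω hb, integral_sum_weight_mul_sq hω ha,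
    integral_sum_weight_mul_sq hω hδ]
  have horth :
      energyForm P (fun i ω => ξ i + Φ i ω) (fun i ω => Dgrad (φ μ) i ω - Φ i ω) = 0 := by
    rw [show (fun i ω => Dgrad (φ μ) i ω - Φ i ω) = Dgrad (φ μ) - Φ from rfl,
      energyForm_sub_right hω ha hDφ hΦ,
      energyForm_add_limit_Dgrad_eq_zero hω hβ hshift hφ hΦ hlim hμ,
      energyForm_add_limit_limit_eq_zero hω hβ hshift hφ hΦ hlim, sub_zero]
  have hsplit : (fun i ω => ξ i + Dgrad (φ μ) i ω)
      = (fun i ω => ξ i + Φ i ω) + fun i ω => Dgrad (φ μ) i ω - Φ i ω := by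
    funext i ω
    simp only [Pi.add_apply]
    ring
  have hnonneg := energyForm_self_nonneg (P := P) hω (u := fun i ω => Dgrad (φ μ) i ω - Φ i ω)
  rw [hsplit, energyForm_add_add_self hω ha hδ, horth]
  exact ⟨by ring, by linarith⟩

/-- the regularized approximation of the homogenized coefficient converges
from above, with error given by the energy of the gradient difference: if `Φ` is the
L²-limit of `Dφ_μ` as `μ → 0⁺`, then for every `μ > 0`,
`E[(ξ+Dφ_μ)·A(ξ+Dφ_μ)] − E[(ξ+Φ)·A(ξ+Φ)] = E[(Dφ_μ−Φ)·A(Dφ_μ−Φ)]`; in particular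
`E[(ξ+Dφ_μ)·A(ξ+Dφ_μ)] ≥ E[(ξ+Φ)·A(ξ+Φ)]`. -/
theorem statement12 {d : ℕ} (hd : 1 ≤ d) {α β : ℝ} (hα : 0 < α) (hαβ : α ≤ β)
    (P : Measure (Env d)) [IsProbabilityMeasure P]
    (hsupp : ∀ᵐ ω ∂P, ∀ e, ω e ∈ Set.Icc α β)
    (hshift : ∀ z : Fin d → ℤ, MeasurePreserving (shift z) P P)
    (ξ : Fin d → ℝ) (φ : ℝ → Env d → ℝ)
    (hφ : ∀ μ : ℝ, 0 < μ → MemLp (φ μ) 2 P ∧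
      (∀ᵐ ω ∂P, μ * φ μ ω + genL (φ μ) ω = drift ξ ω))
    (Φ : Fin d → Env d → ℝ) (hΦ : ∀ i, MemLp (Φ i) 2 P)
    (hlim : Filter.Tendsto
      (fun μ : ℝ => ∫ ω, ∑ i : Fin d, (Dgrad (φ μ) i ω - Φ i ω) ^ 2 ∂P)
      (nhdsWithin 0 (Set.Ioi 0)) (nhds 0)) :
    ∀ μ : ℝ, 0 < μ →
      (∫ ω, ∑ i : Fin d, ω (0, i) * (ξ i + Dgrad (φ μ) i ω) ^ 2 ∂P)
          - ∫ ω, ∑ i : Fin d, ω (0, i) * (ξ i + Φ i ω) ^ 2 ∂P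
        = ∫ ω, ∑ i : Fin d, ω (0, i) * (Dgrad (φ μ) i ω - Φ i ω) ^ 2 ∂P ∧
      (∫ ω, ∑ i : Fin d, ω (0, i) * (ξ i + Φ i ω) ^ 2 ∂P)
        ≤ ∫ ω, ∑ i : Fin d, ω (0, i) * (ξ i + Dgrad (φ μ) i ω) ^ 2 ∂P :=
  statement12_general hα hαβ P hsupp hshift ξ φ hφ Φ hΦ hlim

end StochHom
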